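/- Let q ∈ ℝ^n be a constant covector with q_0 = 0 (so that Σ_α k^α q_α = 0) and define the constant 2-form Q_{αβ} = k_α q_β − k_β q_α. Then for the plane-fronted metric: (i) Σ_β Q_{αβ} k^β = 0; (ii) for every smooth f : ℝ^n → ℝ the covariant derivative D_α(f Q_{βγ}) := (∂_α f) Q_{βγ} − f Σ_ε Γ^ε_{αβ} Q_{εγ} − f Σ_ε Γ^ε_{αγ} Q_{βε} equals (∂_α f + f k_α ∂_0 h) Q_{βγ} at every point; (iii) consequently, if Q ≠ 0 then f Q is covariantly constant (D_α(f Q_{βγ}) = 0 for all indices everywhere) if and only if ∂_α f + f k_α ∂_0 h = 0 for all α everywhere. -/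

import Mathlib

noncomputable section

/-- Partial derivative of a function on `ℝ^n` in the `μ`-th coordinate direction. -/
def pd {n : ℕ} (μ : Fin n) (f : (Fin n → ℝ) → ℝ) : (Fin n → ℝ) → ℝ :=
  fun p => fderiv ℝ f p (Pi.single μ 1)

/-- Embedding of a transverse index `a ∈ {0,…,m-1}` as the coordinate index `a+2`. -/
def tIdx {m : ℕ} (a : Fin m) : Fin (m + 2) := a.succ.succ

/-- Covariant components `g_{αβ}` of the plane-fronted metric. -/
def gLow (m : ℕ) (η : Matrix (Fin m) (Fin m) ℝ) (h : (Fin (m + 2) → ℝ) → ℝ)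
    (p : Fin (m + 2) → ℝ) (α β : Fin (m + 2)) : ℝ :=
  (if (α = 0 ∧ β = 1) ∨ (α = 1 ∧ β = 0) then 1 else 0)
    + (if α = 1 ∧ β = 1 then 2 * h p else 0)
    + ∑ a : Fin m, ∑ b : Fin m, if α = tIdx a ∧ β = tIdx b then η a b else 0

/-- Contravariant components `g^{αβ}` of the plane-fronted metric. -/
def gUp (m : ℕ) (ηinv : Matrix (Fin m) (Fin m) ℝ) (h : (Fin (m + 2) → ℝ) → ℝ)
    (p : Fin (m + 2) → ℝ) (α β : Fin (m + 2)) : ℝ :=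
  (if (α = 0 ∧ β = 1) ∨ (α = 1 ∧ β = 0) then 1 else 0)
    + (if α = 0 ∧ β = 0 then -(2 * h p) else 0)
    + ∑ a : Fin m, ∑ b : Fin m, if α = tIdx a ∧ β = tIdx b then ηinv a b else 0

/-- Christoffel symbols `Γ^α_{βγ}` of the plane-fronted metric. -/
def chr (m : ℕ) (η ηinv : Matrix (Fin m) (Fin m) ℝ) (h : (Fin (m + 2) → ℝ) → ℝ)
    (p : Fin (m + 2) → ℝ) (α β γ : Fin (m + 2)) : ℝ :=
  (1 / 2) * ∑ δ : Fin (m + 2), gUp m ηinv h p α δ *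
    (pd β (fun q => gLow m η h q δ γ) p + pd γ (fun q => gLow m η h q δ β) p
      - pd δ (fun q => gLow m η h q β γ) p)

/-- Riemann curvature tensor `R^α_{βγδ}` of the plane-fronted metric. -/
def riem (m : ℕ) (η ηinv : Matrix (Fin m) (Fin m) ℝ) (h : (Fin (m + 2) → ℝ) → ℝ)
    (p : Fin (m + 2) → ℝ) (α β γ δ : Fin (m + 2)) : ℝ :=
  pd γ (fun q => chr m η ηinv h q α δ β) p - pd δ (fun q => chr m η ηinv h q α γ β) p
    + ∑ ε : Fin (m + 2), (chr m η ηinv h p α γ ε * chr m η ηinv h p ε δ β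
      - chr m η ηinv h p α δ ε * chr m η ηinv h p ε γ β)

/-- Ricci tensor `R_{βδ}` of the plane-fronted metric. -/
def ricci (m : ℕ) (η ηinv : Matrix (Fin m) (Fin m) ℝ) (h : (Fin (m + 2) → ℝ) → ℝ)
    (p : Fin (m + 2) → ℝ) (β δ : Fin (m + 2)) : ℝ :=
  ∑ α : Fin (m + 2), riem m η ηinv h p α β α δ

/-- Contravariant components `k^α = δ^α_0` of the null vector `k`. -/
def kUp {m : ℕ} (α : Fin (m + 2)) : ℝ := if α = 0 then 1 else 0

/-- Covariant components `k_α = δ^1_α` of the null vector `k`. -/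
def kDown {m : ℕ} (α : Fin (m + 2)) : ℝ := if α = 1 then 1 else 0

/-- Covariant derivative `D_α k_β = −Σ_γ Γ^γ_{αβ} k_γ` of the constant-component
null covector `k`. -/
def covDk (m : ℕ) (η ηinv : Matrix (Fin m) (Fin m) ℝ) (h : (Fin (m + 2) → ℝ) → ℝ)
    (p : Fin (m + 2) → ℝ) (α β : Fin (m + 2)) : ℝ :=
  - ∑ γ : Fin (m + 2), chr m η ηinv h p γ α β * kDown γ

variable {m : ℕ}

lemma tIdx_ne_zero (a : Fin m) : tIdx a ≠ 0 := Fin.succ_ne_zero _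

lemma tIdx_ne_one (a : Fin m) : tIdx a ≠ 1 := by
  intro hc
  have h2 : a.succ.succ = (0 : Fin (m+1)).succ := by
    rw [Fin.succ_zero_eq_one]; exact hc
  exact Fin.succ_ne_zero a (Fin.succ_injective _ h2)

lemma tIdx_inj : Function.Injective (tIdx (m := m)) := fun a b hab =>
  Fin.succ_injective _ (Fin.succ_injective _ hab)

lemma fin_one_ne_zero : (1 : Fin (m+2)) ≠ 0 := by simp [Fin.ext_iff]

lemma sum_split (F : Fin (m+2) → ℝ) :
    ∑ ε, F ε = F 0 + F 1 + ∑ a, F (tIdx a) := by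
  rw [Fin.sum_univ_succ, Fin.sum_univ_succ]
  simp only [tIdx, Fin.succ_zero_eq_one]
  ring

lemma pd_const (c : ℝ) (μ : Fin m) (p : Fin m → ℝ) : pd μ (fun _ => c) p = 0 := by
  simp [pd]

lemma pd_aux (c1 c2 : ℝ) (h : (Fin m → ℝ) → ℝ) (hh : Differentiable ℝ h)
    (μ : Fin m) (p : Fin m → ℝ) :
    pd μ (fun q => c1 + 2 * h q + c2) p = 2 * pd μ h p := by
  unfold pd
  have H : HasFDerivAt (fun q => c1 + 2 * h q + c2) ((2:ℝ) • fderiv ℝ h p) p :=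
    (((hh p).hasFDerivAt.const_mul 2).const_add c1).add_const c2
  rw [H.fderiv]
  simp

lemma pd_gLow (η : Matrix (Fin m) (Fin m) ℝ) (h : (Fin (m+2) → ℝ) → ℝ)
    (hh : Differentiable ℝ h) (μ δ γ : Fin (m+2)) (p : Fin (m+2) → ℝ) :
    pd μ (fun r => gLow m η h r δ γ) p
      = if δ = 1 ∧ γ = 1 then 2 * pd μ h p else 0 := by
  by_cases hc : δ = 1 ∧ γ = 1
  · rw [if_pos hc]
    have : (fun r => gLow m η h r δ γ)
        = fun r => (if (δ = 0 ∧ γ = 1) ∨ (δ = 1 ∧ γ = 0) then (1:ℝ) else 0)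
            + 2 * h r
            + ∑ a : Fin m, ∑ b : Fin m, if δ = tIdx a ∧ γ = tIdx b then η a b else 0 := by
      funext r; simp [gLow, if_pos hc]
    rw [this, pd_aux _ _ h hh]
  · rw [if_neg hc]
    have : (fun r => gLow m η h r δ γ)
        = fun _ => (if (δ = 0 ∧ γ = 1) ∨ (δ = 1 ∧ γ = 0) then (1:ℝ) else 0)
            + 0
            + ∑ a : Fin m, ∑ b : Fin m, if δ = tIdx a ∧ γ = tIdx b then η a b else 0 := by
      funext r; simp [gLow, if_neg hc]
    rw [this, pd_const]

lemma gUp_one (ηinv : Matrix (Fin m) (Fin m) ℝ) (h : (Fin (m+2) → ℝ) → ℝ)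
    (p : Fin (m+2) → ℝ) (δ : Fin (m+2)) :
    gUp m ηinv h p 1 δ = if δ = 0 then 1 else 0 := by
  have h1 : ∀ a : Fin m, (1 : Fin (m+2)) ≠ tIdx a := fun a => (tIdx_ne_one a).symm
  simp [gUp, h1, fin_one_ne_zero]

lemma gUp_tIdx (ηinv : Matrix (Fin m) (Fin m) ℝ) (h : (Fin (m+2) → ℝ) → ℝ)
    (p : Fin (m+2) → ℝ) (a : Fin m) (δ : Fin (m+2)) :
    gUp m ηinv h p (tIdx a) δ = ∑ b, if δ = tIdx b then ηinv a b else 0 := by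
  unfold gUp
  rw [if_neg, if_neg]
  · rw [zero_add, zero_add, Finset.sum_eq_single a]
    · simp [tIdx_inj.eq_iff]
    · intro a' _ hne
      refine Finset.sum_eq_zero fun b _ => if_neg ?_
      rintro ⟨h1, -⟩
      exact hne (tIdx_inj h1).symm
    · simp
  · rintro ⟨h1, -⟩; exact tIdx_ne_zero a h1
  · rintro (⟨h1, -⟩ | ⟨h1, -⟩)
    · exact tIdx_ne_zero a h1
    · exact tIdx_ne_one a h1

lemma chr_one (η ηinv : Matrix (Fin m) (Fin m) ℝ) (h : (Fin (m+2) → ℝ) → ℝ)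
    (hh : Differentiable ℝ h) (p : Fin (m+2) → ℝ) (β γ : Fin (m+2)) :
    chr m η ηinv h p 1 β γ = -(if β = 1 ∧ γ = 1 then pd 0 h p else 0) := by
  unfold chr
  simp only [gUp_one, pd_gLow η h hh, ite_mul, one_mul, zero_mul]
  rw [Finset.sum_ite_eq' Finset.univ (0 : Fin (m+2))]
  have h0 : ¬ ((0 : Fin (m+2)) = 1) := fun hc => fin_one_ne_zero hc.symm
  by_cases hc : β = 1 ∧ γ = 1
  · simp [hc, h0]; try ring
  · simp [hc, h0]

lemma chr_tIdx (η ηinv : Matrix (Fin m) (Fin m) ℝ) (h : (Fin (m+2) → ℝ) → ℝ)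
    (hh : Differentiable ℝ h) (p : Fin (m+2) → ℝ) (a : Fin m) (β γ : Fin (m+2)) :
    chr m η ηinv h p (tIdx a) β γ
      = -(if β = 1 ∧ γ = 1 then ∑ b, ηinv a b * pd (tIdx b) h p else 0) := by
  unfold chr
  simp only [gUp_tIdx, pd_gLow η h hh, Finset.sum_mul, ite_mul, zero_mul]
  rw [Finset.sum_comm]
  have step : ∀ b : Fin m,
      (∑ δ : Fin (m+2), if δ = tIdx b then
        ηinv a b * ((if δ = 1 ∧ γ = 1 then 2 * pd β h p else 0)
          + (if δ = 1 ∧ β = 1 then 2 * pd γ h p else 0)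
          - (if β = 1 ∧ γ = 1 then 2 * pd δ h p else 0)) else 0)
      = ηinv a b * (0 + 0 - (if β = 1 ∧ γ = 1 then 2 * pd (tIdx b) h p else 0)) := by
    intro b
    rw [Finset.sum_ite_eq' Finset.univ (tIdx b)]
    simp [tIdx_ne_one b]
  simp only [step]
  by_cases hc : β = 1 ∧ γ = 1
  · rw [if_pos hc,
      show (∑ b, ηinv a b * ((0:ℝ) + 0 - (if β = 1 ∧ γ = 1 then 2 * pd (tIdx b) h p else 0)))
        = -2 * ∑ b, ηinv a b * pd (tIdx b) h p from by
          rw [Finset.mul_sum]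
          exact Finset.sum_congr rfl fun b _ => by rw [if_pos hc]; ring]
    ring
  · simp [hc]

/-- for a constant covector `q` with `q_0 = 0` and the constant 2-form
`Q_{αβ} = k_α q_β − k_β q_α`: (i) `Σ_β Q_{αβ} k^β = 0`; (ii) for smooth `f`,
`D_α(f Q_{βγ}) = (∂_α f + f k_α ∂_0 h) Q_{βγ}`; (iii) if `Q ≠ 0` then `f Q` is
covariantly constant iff `∂_α f + f k_α ∂_0 h = 0` for all `α` everywhere. -/
theorem stmt8 (m : ℕ) (hm : 1 ≤ m) (η ηinv : Matrix (Fin m) (Fin m) ℝ)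
    (hηsymm : η.IsSymm) (hη : η * ηinv = 1) (hη' : ηinv * η = 1)
    (h : (Fin (m + 2) → ℝ) → ℝ) (hh : ContDiff ℝ (⊤ : ℕ∞) h)
    (q : Fin (m + 2) → ℝ) (hq : q 0 = 0)
    (Q : Fin (m + 2) → Fin (m + 2) → ℝ)
    (hQ : ∀ α β : Fin (m + 2), Q α β = kDown α * q β - kDown β * q α)
    (f : (Fin (m + 2) → ℝ) → ℝ) (hf : ContDiff ℝ (⊤ : ℕ∞) f) :
    (∀ α : Fin (m + 2), ∑ β : Fin (m + 2), Q α β * kUp β = 0)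
    ∧ (∀ (p : Fin (m + 2) → ℝ) (α β γ : Fin (m + 2)),
        pd α f p * Q β γ
          - f p * (∑ ε : Fin (m + 2), chr m η ηinv h p ε α β * Q ε γ)
          - f p * (∑ ε : Fin (m + 2), chr m η ηinv h p ε α γ * Q β ε)
        = (pd α f p + f p * kDown α * pd (0 : Fin (m + 2)) h p) * Q β γ)
    ∧ (Q ≠ (fun _ _ => 0) →
        ((∀ (p : Fin (m + 2) → ℝ) (α β γ : Fin (m + 2)),
            pd α f p * Q β γ
              - f p * (∑ ε : Fin (m + 2), chr m η ηinv h p ε α β * Q ε γ)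
              - f p * (∑ ε : Fin (m + 2), chr m η ηinv h p ε α γ * Q β ε) = 0)
          ↔ (∀ (p : Fin (m + 2) → ℝ) (α : Fin (m + 2)),
              pd α f p + f p * kDown α * pd (0 : Fin (m + 2)) h p = 0))) := by

  -- basic facts
  have hd : Differentiable ℝ h := hh.differentiable (by simp)
  have h0 : ¬ ((0 : Fin (m+2)) = 1) := fun hc => fin_one_ne_zero hc.symm
  -- the transverse contraction constant
  set C : (Fin (m+2) → ℝ) → ℝ :=
    fun p => ∑ a, (∑ b, ηinv a b * pd (tIdx b) h p) * q (tIdx a) with hC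
  -- key contraction identity
  have key : ∀ (p : Fin (m+2) → ℝ) (α β γ : Fin (m+2)),
      (∑ ε, chr m η ηinv h p ε α β * Q ε γ)
        = if α = 1 ∧ β = 1 then
            kDown γ * C p - pd 0 h p * (q γ - kDown γ * q 1) else 0 := by
    intro p α β γ
    rw [sum_split (fun ε => chr m η ηinv h p ε α β * Q ε γ)]
    have e0 : Q 0 γ = 0 := by simp [hQ, kDown, h0, hq]
    have e1 : Q 1 γ = q γ - kDown γ * q 1 := by simp [hQ, kDown]
    have ea : ∀ a : Fin m, Q (tIdx a) γ = -(kDown γ * q (tIdx a)) := by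
      intro a; simp [hQ, kDown, tIdx_ne_one a]
    simp only [e0, e1, ea, mul_zero, zero_add, chr_one η ηinv h hd,
      chr_tIdx η ηinv h hd]
    by_cases hP : α = 1 ∧ β = 1
    · simp only [if_pos hP]
      have : (∑ a : Fin m, -(∑ b, ηinv a b * pd (tIdx b) h p) * -(kDown γ * q (tIdx a)))
          = kDown γ * C p := by
        rw [hC, Finset.mul_sum]
        exact Finset.sum_congr rfl fun a _ => by ring
      rw [this]; ring
    · simp [if_neg hP]
  have key2 : ∀ (p : Fin (m+2) → ℝ) (α β γ : Fin (m+2)),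
      (∑ ε, chr m η ηinv h p ε α γ * Q β ε)
        = -(if α = 1 ∧ γ = 1 then
            kDown β * C p - pd 0 h p * (q β - kDown β * q 1) else 0) := by
    intro p α β γ
    rw [← key p α γ β, ← Finset.sum_neg_distrib]
    exact Finset.sum_congr rfl fun ε _ => by rw [hQ, hQ]; ring
  -- part (ii)
  have part2 : ∀ (p : Fin (m + 2) → ℝ) (α β γ : Fin (m + 2)),
      pd α f p * Q β γ
        - f p * (∑ ε : Fin (m + 2), chr m η ηinv h p ε α β * Q ε γ)
        - f p * (∑ ε : Fin (m + 2), chr m η ηinv h p ε α γ * Q β ε)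
      = (pd α f p + f p * kDown α * pd (0 : Fin (m + 2)) h p) * Q β γ := by
    intro p α β γ
    rw [key, key2, hQ]
    by_cases hα : α = 1 <;> by_cases hβ : β = 1 <;> by_cases hγ : γ = 1 <;>
      simp [kDown, hα, hβ, hγ] <;> ring
  refine ⟨?_, part2, ?_⟩
  · -- part (i)
    intro α
    rw [sum_split (fun β => Q α β * kUp β)]
    have k0 : kUp (m := m) 0 = 1 := by simp [kUp]
    have k1 : kUp (m := m) 1 = 0 := by simp [kUp, fin_one_ne_zero]
    have ka : ∀ a : Fin m, kUp (tIdx a) = 0 := fun a => by simp [kUp, tIdx_ne_zero a]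
    simp [k0, k1, ka, hQ, kDown, h0, hq]
  · -- part (iii)
    intro hQne
    have hex : ∃ β γ, Q β γ ≠ 0 := by
      by_contra hc
      push_neg at hc
      exact hQne (funext fun β => funext fun γ => hc β γ)
    obtain ⟨β₀, γ₀, hne⟩ := hex
    constructor
    · intro hD p α
      have := hD p α β₀ γ₀
      rw [part2 p α β₀ γ₀] at this
      rcases mul_eq_zero.mp this with hh' | hh'
      · exact hh'
      · exact absurd hh' hne
    · intro hE p α β γ
      rw [part2 p α β γ, hE p α, zero_mul]
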